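/- arXiv:1607.02543 — 6 statements merged into one kernel-verified Lean document; each statement's English description precedes it below -/
import Mathlib

section
/- Suppose k and m are positive integers with gcd(m,k) = 1 and m ≤ k/(1 + g(k)). Then P(k) > (g(m)−1)·k; that is, there exists a residue ℓ coprime to k such that every prime p with p ≡ ℓ (mod k) satisfies p > (g(m)−1)·k. -/
/-!
Take a run `a, a + 1, …, a + g(m) - 2` of integers none of which is coprime to `m`, and a
residue `ℓ ∈ (m, k]` coprime to `k` with `ℓ ≡ a k (mod m)`: if `ℓ₀ ∈ [1, m]` lies in that class
mod `m`, one of `ℓ₀ + m, ℓ₀ + 2m, …, ℓ₀ + g(k) m ≤ k` is coprime to `k`, because `m` is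
invertible modulo `k`. A prime `p = ℓ + j k ≤ (g(m) - 1) k` would have `j < g(m) - 1` and
`p ≡ (a + j) k (mod m)`, so `p` would share a factor with `m`, forcing `p ≤ m < ℓ ≤ p`.
-/

/-- Jacobsthal's function: the smallest positive integer `g` such that every `g`
consecutive integers contain an integer coprime to `m`. -/
noncomputable def jacobsthal (m : ℕ) : ℕ :=
  sInf {g : ℕ | 0 < g ∧ ∀ a : ℤ, ∃ n : ℤ, a ≤ n ∧ n < a + g ∧ Int.gcd n m = 1}

theorem Int.ModEq.isCoprime_iff {a b n : ℤ} (h : a ≡ b [ZMOD n]) :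
    IsCoprime a n ↔ IsCoprime b n := by
  obtain ⟨c, hc⟩ := Int.modEq_iff_add_fac.1 h
  rw [hc, IsCoprime.add_mul_left_left_iff]

theorem exists_isCoprime_Ico_jacobsthal {m : ℕ} (hm : 0 < m) (a : ℤ) :
    ∃ n : ℤ, a ≤ n ∧ n < a + jacobsthal m ∧ IsCoprime n m := by
  have hne :
      {g : ℕ | 0 < g ∧ ∀ a : ℤ, ∃ n : ℤ, a ≤ n ∧ n < a + g ∧ Int.gcd n m = 1}.Nonempty := by
    refine ⟨m, hm, fun a => ⟨a + (1 - a) % m, ?_, ?_, ?_⟩⟩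
    · have := Int.emod_nonneg (1 - a) (b := m) (by omega)
      omega
    · have := Int.emod_lt_of_pos (1 - a) (b := m) (by omega)
      omega
    · have h1 : a + (1 - a) % m ≡ 1 [ZMOD m] := by
        simpa using (Int.mod_modEq (1 - a) m).add_left a
      rw [← Int.isCoprime_iff_gcd_eq_one, h1.isCoprime_iff]
      exact isCoprime_one_left
  obtain ⟨n, han, hna, hn⟩ := (Nat.sInf_mem hne).2 a
  exact ⟨n, han, hna, Int.isCoprime_iff_gcd_eq_one.2 hn⟩

theorem exists_forall_lt_jacobsthal_sub_one_not_isCoprime (m : ℕ) :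
    ∃ a : ℤ, ∀ i : ℕ, i < jacobsthal m - 1 → ¬IsCoprime (a + i) m := by
  by_contra! h
  have hpos : 0 < jacobsthal m - 1 := by
    obtain ⟨i, hi, -⟩ := h 0
    omega
  refine Nat.notMem_of_lt_sInf (show jacobsthal m - 1 < jacobsthal m by omega)
    ⟨hpos, fun a => ?_⟩
  obtain ⟨i, hi, hcop⟩ := h a
  exact ⟨a + i, by omega, by omega, Int.isCoprime_iff_gcd_eq_one.1 hcop⟩

theorem exists_isCoprime_add_mul_le_jacobsthal {m : ℤ} {k : ℕ} (hk : 0 < k)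
    (hmk : IsCoprime m k) (b : ℤ) :
    ∃ t : ℤ, 1 ≤ t ∧ t ≤ jacobsthal k ∧ IsCoprime (b + t * m) k := by
  obtain ⟨u, v, huv⟩ := id hmk
  obtain ⟨n, hn1, hn2, hn⟩ := exists_isCoprime_Ico_jacobsthal hk (u * b + 1)
  refine ⟨n - u * b, by omega, by omega, ?_⟩
  -- `u` inverts `m` modulo `k`, so `b + (n - u b) m ≡ m n (mod k)`.
  have hb : b + (n - u * b) * m = m * n + k * (v * b) := by linear_combination (-b) * huv
  rw [hb, IsCoprime.add_mul_left_left_iff]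
  exact hmk.mul_left hn

theorem exists_coprime_modEq_of_mul_one_add_jacobsthal_le {m k : ℕ} (hm : 0 < m)
    (hmk : m.Coprime k) (hk : m * (1 + jacobsthal k) ≤ k) (c : ℤ) :
    ∃ ℓ : ℕ, m < ℓ ∧ ℓ ≤ k ∧ ℓ.Coprime k ∧ (ℓ : ℤ) ≡ c [ZMOD m] := by
  have hr0 := Int.emod_nonneg (c - 1) (b := m) (by omega)
  have hrm := Int.emod_lt_of_pos (c - 1) (b := m) (by omega)
  have hrc : (c - 1) % m + 1 ≡ c [ZMOD m] := by
    simpa using (Int.mod_modEq (c - 1) m).add_right 1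
  obtain ⟨t, ht1, htk, hcop⟩ := exists_isCoprime_add_mul_le_jacobsthal
    (by nlinarith) (Nat.isCoprime_iff_coprime.2 hmk) ((c - 1) % m + 1)
  obtain ⟨ℓ, hℓ⟩ : ∃ ℓ : ℕ, (ℓ : ℤ) = (c - 1) % m + 1 + t * m :=
    ⟨_, Int.toNat_of_nonneg (by nlinarith)⟩
  have hkZ : (m : ℤ) * (1 + jacobsthal k) ≤ k := by exact_mod_cast hk
  refine ⟨ℓ, by zify; nlinarith, by zify; nlinarith, ?_, ?_⟩
  · exact Nat.isCoprime_iff_coprime.1 (hℓ ▸ hcop)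
  · rw [hℓ]
    exact (Int.add_mul_modulus_modEq_iff.2 rfl).trans hrc

theorem mul_lt_of_prime_of_modEq {a : ℤ} {N m k ℓ p : ℕ} (hm : 0 < m)
    (hrun : ∀ i : ℕ, i < N → ¬IsCoprime (a + i) m) (hmℓ : m < ℓ) (hℓk : ℓ ≤ k)
    (hℓa : (ℓ : ℤ) ≡ a * k [ZMOD m]) (hp : p.Prime) (hpℓ : p ≡ ℓ [MOD k]) :
    N * k < p := by
  by_contra! hpN
  have hℓp : ℓ ≤ p := hpℓ.symm.le_of_lt_add (by have := hp.pos; omega)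
  obtain ⟨j, hj⟩ := (Nat.modEq_iff_dvd' hℓp).1 hpℓ.symm
  have hpj : p = ℓ + k * j := by omega
  have hjN : j < N := by
    have : k * j < k * N := by rw [mul_comm k N]; omega
    exact Nat.lt_of_mul_lt_mul_left this
  have hpm : IsCoprime (p : ℤ) m := Nat.isCoprime_iff_coprime.2 <|
    (Nat.Prime.coprime_iff_not_dvd hp).2 fun hdvd => by
      have := Nat.le_of_dvd hm hdvd
      omega
  have hpaj : (p : ℤ) ≡ (a + j) * k [ZMOD m] := by
    rw [hpj, add_mul]
    push_cast
    exact mul_comm (k : ℤ) j ▸ hℓa.add_right _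
  exact hrun j hjN (hpaj.isCoprime_iff.1 hpm).of_mul_left_left

theorem P_gt_of_jacobsthal_general (k m : ℕ) (hm : 0 < m)
    (hcop : Nat.Coprime m k)
    (hle : (m : ℝ) ≤ (k : ℝ) / (1 + jacobsthal k)) :
    ∃ ℓ : ℕ, Nat.Coprime ℓ k ∧
      ∀ p : ℕ, p.Prime → p ≡ ℓ [MOD k] → (jacobsthal m - 1) * k < p := by
  have hmk : m * (1 + jacobsthal k) ≤ k := by
    rw [le_div_iff₀ (by positivity)] at hle
    exact_mod_cast hle
  obtain ⟨a, hrun⟩ := exists_forall_lt_jacobsthal_sub_one_not_isCoprime m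
  obtain ⟨ℓ, hmℓ, hℓk, hℓcop, hℓa⟩ :=
    exists_coprime_modEq_of_mul_one_add_jacobsthal_le hm hcop hmk (a * k)
  exact ⟨ℓ, hℓcop, fun p hp hpℓ => mul_lt_of_prime_of_modEq hm hrun hmℓ hℓk hℓa hp hpℓ⟩

/-- If `k, m` are positive integers with `gcd(m,k) = 1` and `m ≤ k/(1 + g(k))`, then
`P(k) > (g(m) - 1)·k`: there is a residue `ℓ` coprime to `k` such that every prime
`p ≡ ℓ (mod k)` satisfies `p > (g(m)-1)·k`. -/
theorem P_gt_of_jacobsthal (k m : ℕ) (hk : 0 < k) (hm : 0 < m)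
    (hcop : Nat.Coprime m k)
    (hle : (m : ℝ) ≤ (k : ℝ) / (1 + jacobsthal k)) :
    ∃ ℓ : ℕ, Nat.Coprime ℓ k ∧
      ∀ p : ℕ, p.Prime → p ≡ ℓ [MOD k] → (jacobsthal m - 1) * k < p :=
  P_gt_of_jacobsthal_general k m hm hcop hle
end

section
/- Let m be a positive integer and let x < y be integers. Suppose that for each prime p dividing m an integer a_p is given, such that for every integer n with x < n ≤ y there is some prime p | m with n ≡ a_p (mod p). Then there exists an integer t such that gcd(t+n, m) > 1 for every integer n with x < n ≤ y; consequently g(m) > y − x. -/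
/-!
By the Chinese remainder theorem there is a `t` with `t ≡ -a p (mod p)` for every prime `p ∣ m`.
If `n ∈ (x, y]` is covered by the class `a p (mod p)`, then `p ∣ t + n`, so none of the `y - x`
consecutive integers `t + n` is coprime to `m`. Since every window of `jacobsthal m` consecutive
integers contains one coprime to `m` (and the defining set is nonempty, as `m` itself belongs to
it), `jacobsthal m` exceeds `y - x`.
-/

theorem Int.exists_forall_modEq_of_prime {s : Finset ℕ} (hs : ∀ p ∈ s, p.Prime) (b : ℕ → ℤ) :
    ∃ t : ℤ, ∀ p ∈ s, t ≡ b p [ZMOD p] := by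
  have hprime : ∀ p ∈ s, Prime (Ideal.span {(p : ℤ)}) := fun p hp => by
    have hp0 : (p : ℤ) ≠ 0 := by exact_mod_cast (hs p hp).ne_zero
    exact Ideal.prime_of_isPrime (by simpa using hp0)
      ((Ideal.span_singleton_prime hp0).mpr (Nat.prime_iff_prime_int.mp (hs p hp)))
  have hne : ∀ p ∈ s, ∀ q ∈ s, p ≠ q → Ideal.span {(p : ℤ)} ≠ Ideal.span {(q : ℤ)} := by
    intro p _ q _ hpq h
    rw [Ideal.span_singleton_eq_span_singleton, Int.associated_iff_natAbs] at h
    exact hpq (by simpa using h)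
  obtain ⟨t, ht⟩ := IsDedekindDomain.exists_forall_sub_mem_ideal _ (fun _ => 1) hprime hne
    (fun p => b p)
  refine ⟨t, fun p hp => ?_⟩
  have := ht p hp
  rw [pow_one, Ideal.mem_span_singleton] at this
  exact (Int.modEq_iff_dvd.mpr this).symm

theorem Int.one_lt_gcd_of_prime_dvd {n : ℤ} {m p : ℕ} (hm : m ≠ 0) (hp : p.Prime)
    (hpn : (p : ℤ) ∣ n) (hpm : p ∣ m) : 1 < Int.gcd n m :=
  hp.one_lt.trans_le <| Nat.le_of_dvd (Int.gcd_pos_of_ne_zero_right _ (by exact_mod_cast hm))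
    (Int.natCast_dvd_natCast.mp (Int.dvd_coe_gcd hpn (by exact_mod_cast hpm)))

theorem exists_gcd_eq_one_of_window_length_self {m : ℕ} (hm : 0 < m) (a : ℤ) :
    ∃ n : ℤ, a ≤ n ∧ n < a + m ∧ Int.gcd n m = 1 := by
  have hm' : (0 : ℤ) < m := by exact_mod_cast hm
  -- the representative of `1 mod m` in `[a, a + m)`
  refine ⟨a + (1 - a) % m, by linarith [Int.emod_nonneg (1 - a) hm'.ne'],
    by linarith [Int.emod_lt_of_pos (1 - a) hm'], ?_⟩
  refine Int.isCoprime_iff_gcd_eq_one.mp ⟨1, (1 - a) / m, ?_⟩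
  linarith [Int.emod_add_ediv_mul (1 - a) m]

theorem exists_gcd_eq_one_of_window_length_jacobsthal {m : ℕ} (hm : 0 < m) (a : ℤ) :
    ∃ n : ℤ, a ≤ n ∧ n < a + jacobsthal m ∧ Int.gcd n m = 1 :=
  (Nat.sInf_mem (⟨m, hm, exists_gcd_eq_one_of_window_length_self hm⟩ :
    {g : ℕ | 0 < g ∧ ∀ a : ℤ, ∃ n : ℤ, a ≤ n ∧ n < a + g ∧ Int.gcd n m = 1}.Nonempty)).2 a

theorem lt_jacobsthal_of_forall_one_lt_gcd {m : ℕ} (hm : 0 < m) {x y : ℤ}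
    (h : ∀ n : ℤ, x < n → n ≤ y → 1 < Int.gcd n m) : y - x < jacobsthal m := by
  by_contra! hle
  obtain ⟨n, hxn, hny, hn⟩ := exists_gcd_eq_one_of_window_length_jacobsthal hm (x + 1)
  exact (h n (by omega) (by omega)).ne' hn

theorem covering_system_gives_jacobsthal_general (m : ℕ) (hm : 0 < m) (x y : ℤ)
    (a : ℕ → ℤ)
    (hcover : ∀ n : ℤ, x < n → n ≤ y →
      ∃ p : ℕ, p.Prime ∧ (p : ℕ) ∣ m ∧ n ≡ a p [ZMOD (p : ℤ)]) :
    (∃ t : ℤ, ∀ n : ℤ, x < n → n ≤ y → 1 < Int.gcd (t + n) m) ∧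
      y - x < (jacobsthal m : ℤ) := by
  obtain ⟨t, ht⟩ := Int.exists_forall_modEq_of_prime (s := m.primeFactors)
    (fun _ => Nat.prime_of_mem_primeFactors) (fun p => -a p)
  have hgcd : ∀ n : ℤ, x < n → n ≤ y → 1 < Int.gcd (t + n) m := by
    intro n hxn hny
    obtain ⟨p, hp, hpm, hn⟩ := hcover n hxn hny
    have htn : t + n ≡ -a p + a p [ZMOD p] :=
      (ht p (Nat.mem_primeFactors.mpr ⟨hp, hpm, hm.ne'⟩)).add hn
    rw [neg_add_cancel, Int.modEq_zero_iff_dvd] at htn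
    exact Int.one_lt_gcd_of_prime_dvd hm.ne' hp htn hpm
  have hwindow := lt_jacobsthal_of_forall_one_lt_gcd hm (x := t + x) (y := t + y)
    fun n hxn hny => by simpa using hgcd (n - t) (by omega) (by omega)
  exact ⟨⟨t, hgcd⟩, by linarith⟩

/-- If for each prime `p ∣ m` a residue `a p` is given such that every integer
`n ∈ (x, y]` satisfies `n ≡ a p (mod p)` for some prime `p ∣ m`, then there is an
integer `t` with `gcd(t + n, m) > 1` for all `n ∈ (x, y]`; consequently
`g(m) > y - x`. -/
theorem covering_system_gives_jacobsthal (m : ℕ) (hm : 0 < m) (x y : ℤ) (hxy : x < y)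
    (a : ℕ → ℤ)
    (hcover : ∀ n : ℤ, x < n → n ≤ y →
      ∃ p : ℕ, p.Prime ∧ (p : ℕ) ∣ m ∧ n ≡ a p [ZMOD (p : ℤ)]) :
    (∃ t : ℤ, ∀ n : ℤ, x < n → n ≤ y → 1 < Int.gcd (t + n) m) ∧
      y - x < (jacobsthal m : ℤ) :=
  covering_system_gives_jacobsthal_general m hm x y a hcover
end

section
/- For every ε ∈ (0,1/2) and every A > 0 there is a constant C = C(ε,A) such that for all N ≥ 3: the number of integers k with e^{e^{e^e}} ≤ k ≤ N having more than exp((1/2−ε)·log₂k·log₄k/log₃k) distinct prime factors is at most C·N/(log N)^A. In particular, the set of k with at most exp((1/2−ε)·log₂k·log₄k/log₃k) distinct prime factors has natural density one. -/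
/-!
Since `2 ^ ω(k) ≤ d(k)` and `∑_{k ≤ N} d(k) ≤ N (1 + log N)`, Markov's inequality bounds the
number of `k ≤ N` with `ω(k) ≥ T` by `N (1 + log N) / 2 ^ T`. For `√N < k ≤ N` the bound
`exp (c log₂k log₄k / log₃k)` is at least `T(N) = exp (c (log₂N - log 2) / log₃N)`, and `2 ^ T(N)`
outgrows every power of `log N`; the `k ≤ √N` are negligible. Density one is the case `A = 1`.
-/

open Asymptotics Filter Finset Real Topology

theorem Nat.two_pow_card_primeFactors_le_card_divisors {n : ℕ} (hn : n ≠ 0) :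
    2 ^ #n.primeFactors ≤ #n.divisors := by
  rw [Nat.card_divisors hn, ← prod_const]
  refine prod_le_prod' fun p hp => ?_
  have : n.factorization p ≠ 0 := Finsupp.mem_support_iff.mp (by rwa [Nat.support_factorization])
  omega

theorem sum_Ioc_card_divisors_le (N : ℕ) :
    ∑ k ∈ Ioc 0 N, (#k.divisors : ℝ) ≤ N * (1 + log N) := by
  have hsum : ∑ k ∈ Ioc 0 N, (#k.divisors : ℝ) = ∑ d ∈ Ioc 0 N, ((N / d : ℕ) : ℝ) := by
    simp_rw [← ArithmeticFunction.sigma_zero_apply]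
    exact_mod_cast ArithmeticFunction.sum_Ioc_sigma0_eq_sum_div N
  calc ∑ k ∈ Ioc 0 N, (#k.divisors : ℝ) = ∑ d ∈ Ioc 0 N, ((N / d : ℕ) : ℝ) := hsum
    _ ≤ ∑ d ∈ Ioc 0 N, (N : ℝ) * (d : ℝ)⁻¹ :=
      sum_le_sum fun d _ => Nat.cast_div_le.trans_eq (div_eq_mul_inv _ _)
    _ = N * harmonic N := by
      rw [← mul_sum, harmonic_eq_sum_Icc]
      push_cast
      rfl
    _ ≤ N * (1 + log N) := by gcongr; exact harmonic_le_one_add_log N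

theorem card_two_pow_card_primeFactors_ge_mul_le (N : ℕ) (t : ℝ) :
    (#{k ∈ Ioc 0 N | t ≤ 2 ^ #k.primeFactors} : ℝ) * t ≤ N * (1 + log N) :=
  calc (#{k ∈ Ioc 0 N | t ≤ 2 ^ #k.primeFactors} : ℝ) * t
      ≤ ∑ k ∈ Ioc 0 N with t ≤ 2 ^ #k.primeFactors, (2 : ℝ) ^ #k.primeFactors := by
        rw [← nsmul_eq_mul]
        exact card_nsmul_le_sum _ _ _ fun k hk => (mem_filter.1 hk).2
    _ ≤ ∑ k ∈ Ioc 0 N, (2 : ℝ) ^ #k.primeFactors :=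
        sum_le_sum_of_subset_of_nonneg (filter_subset _ _) fun _ _ _ => by positivity
    _ ≤ ∑ k ∈ Ioc 0 N, (#k.divisors : ℝ) := sum_le_sum fun k hk => by
        exact_mod_cast Nat.two_pow_card_primeFactors_le_card_divisors (mem_Ioc.1 hk).1.ne'
    _ ≤ N * (1 + log N) := sum_Ioc_card_divisors_le N

noncomputable def omegaExponent (c x : ℝ) : ℝ :=
  c * log (log x) * log (log (log (log x))) / log (log (log x))

theorem le_omegaExponent {c x y : ℝ} (hc : 0 ≤ c) (hx : exp (exp (exp (exp 1))) ≤ x)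
    (hxy : x ≤ y) (hyx : y ≤ x ^ 2) :
    c * (log (log y) - log 2) / log (log (log y)) ≤ omegaExponent c x := by
  have le_log {a z : ℝ} (h : exp a ≤ z) : a ≤ log z :=
    (le_log_iff_exp_le ((exp_pos a).trans_le h)).2 h
  have hx1 := le_log hx
  have hx2 := le_log hx1
  have hx3 := le_log hx2
  have hx4 : 1 ≤ log (log (log (log x))) := by simpa using le_log (by simpa using hx3)
  have hlogx : 0 < log x := (exp_pos _).trans_le hx1
  have hlog2x : 0 < log (log x) := (exp_pos _).trans_le hx2
  have hlog3x : 0 < log (log (log x)) := (exp_pos _).trans_le hx3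
  have hx0 : 0 < x := (exp_pos _).trans_le hx
  have hlogy : log y ≤ 2 * log x := by
    simpa [log_pow] using log_le_log (hx0.trans_le hxy) hyx
  have hlog2y : log (log y) - log 2 ≤ log (log x) := by
    have := log_le_log (hlogx.trans_le (log_le_log hx0 hxy)) hlogy
    rw [log_mul two_ne_zero hlogx.ne'] at this
    linarith
  have hlog3y : log (log (log x)) ≤ log (log (log y)) :=
    log_le_log hlog2x (log_le_log hlogx (log_le_log hx0 hxy))
  calc c * (log (log y) - log 2) / log (log (log y))
      ≤ c * log (log x) / log (log (log x)) :=
        div_le_div₀ (by positivity) (mul_le_mul_of_nonneg_left hlog2y hc) hlog3x hlog3y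
    _ ≤ omegaExponent c x :=
        div_le_div_of_nonneg_right (le_mul_of_one_le_right (by positivity) hx4) hlog3x.le

theorem eventually_mul_le_exp_div_log (a : ℝ) {c : ℝ} (hc : 0 < c) :
    ∀ᶠ u in atTop, a * u ≤ exp (c * (u - log 2) / log u) := by
  filter_upwards [eventually_ge_atTop 4, eventually_ge_atTop (24 * a / (c / 4) ^ 4)]
    with u hu4 hua
  have hu0 : 0 < u := by linarith
  have hlogu : 0 < log u := log_pos (by linarith)
  have hlog2 : log 2 ≤ u / 2 := by linarith [log_two_lt_d9]
  have hsqrt : log u ≤ 2 * √u := by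
    have := log_le_rpow_div hu0.le (one_half_pos (α := ℝ))
    rw [sqrt_eq_rpow]; linarith
  have hg : c / 4 * √u ≤ c * (u - log 2) / log u := by
    have hsq : √u * log u ≤ 2 * u := by
      nlinarith [mul_le_mul_of_nonneg_left hsqrt (sqrt_nonneg u), sq_sqrt hu0.le]
    rw [le_div_iff₀ hlogu]
    nlinarith
  calc a * u ≤ (c / 4) ^ 4 * u ^ 2 / 24 := by
        rw [div_le_iff₀ (by positivity)] at hua
        nlinarith
    _ = (c / 4 * √u) ^ 4 / Nat.factorial 4 := by
        rw [mul_pow, show √u ^ 4 = (√u ^ 2) ^ 2 by ring, sq_sqrt hu0.le]; norm_num [Nat.factorial]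
    _ ≤ (c * (u - log 2) / log u) ^ 4 / Nat.factorial 4 := by gcongr
    _ ≤ exp (c * (u - log 2) / log u) :=
        pow_div_factorial_le_exp _ ((show 0 ≤ c / 4 * √u by positivity).trans hg) 4

noncomputable def omegaThreshold (c y : ℝ) : ℝ :=
  exp (c * (log (log y) - log 2) / log (log (log y)))

noncomputable def manyFactors (c : ℝ) (N : ℕ) : Finset ℕ :=
  {k ∈ Ioc 0 N | exp (exp (exp (exp 1))) ≤ (k : ℝ) ∧ exp (omegaExponent c k) < #k.primeFactors}

theorem coe_manyFactors (c : ℝ) (N : ℕ) :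
    (manyFactors c N : Set ℕ) = {k : ℕ | exp (exp (exp (exp 1))) ≤ (k : ℝ) ∧ k ≤ N ∧
      exp (omegaExponent c k) < #k.primeFactors} := by
  ext k
  simp only [manyFactors, coe_filter, mem_Ioc, Set.mem_ofPred_eq]
  constructor
  · rintro ⟨⟨-, hkN⟩, hE, hω⟩
    exact ⟨hE, hkN, hω⟩
  · rintro ⟨hE, hkN, hω⟩
    exact ⟨⟨Nat.cast_pos.1 ((exp_pos _).trans_le hE), hkN⟩, hE, hω⟩

theorem card_manyFactors_le {c : ℝ} (hc : 0 ≤ c) (N : ℕ) :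
    (#(manyFactors c N) : ℝ) ≤ √N + 1 + N * (1 + log N) / 2 ^ omegaThreshold c N := by
  set t : ℝ := 2 ^ omegaThreshold c N
  have hsub : manyFactors c N ⊆
      range (⌊√(N : ℝ)⌋₊ + 1) ∪ {k ∈ Ioc 0 N | t ≤ 2 ^ #k.primeFactors} := by
    intro k hk
    obtain ⟨hkN, hE, hω⟩ := mem_filter.1 hk
    rw [mem_union, mem_range, Nat.lt_succ_iff, mem_filter]
    by_cases hks : (k : ℝ) ≤ √N
    · exact Or.inl (Nat.le_floor hks)
    refine Or.inr ⟨hkN, ?_⟩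
    have hk0 : (0 : ℝ) < k := (exp_pos _).trans_le hE
    have hNk : (N : ℝ) ≤ (k : ℝ) ^ 2 := ((sqrt_lt' hk0).1 (not_le.1 hks)).le
    have hθ := le_omegaExponent hc hE (by exact_mod_cast (mem_Ioc.1 hkN).2) hNk
    rw [← rpow_natCast]
    exact rpow_le_rpow_of_exponent_le one_le_two ((exp_le_exp.2 hθ).trans hω.le)
  have ht : 0 < t := by positivity
  calc (#(manyFactors c N) : ℝ)
      ≤ #(range (⌊√(N : ℝ)⌋₊ + 1)) + #{k ∈ Ioc 0 N | t ≤ 2 ^ #k.primeFactors} := by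
        exact_mod_cast (card_le_card hsub).trans (card_union_le _ _)
    _ ≤ √N + 1 + N * (1 + log N) / t := by
        rw [card_range]
        push_cast
        gcongr
        · exact Nat.floor_le (sqrt_nonneg _)
        · rw [le_div_iff₀ ht]
          exact card_two_pow_card_primeFactors_ge_mul_le N t

theorem eventually_sqrt_le_div_log_rpow (A : ℝ) :
    ∀ᶠ N : ℕ in atTop, √(N : ℝ) ≤ N / log N ^ A := by
  have h := tendsto_natCast_atTop_atTop.eventually
    ((isLittleO_log_rpow_rpow_atTop A one_half_pos).bound one_pos)
  filter_upwards [h, eventually_ge_atTop 2] with N hN hN2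
  have hlog : 0 < log N := log_pos (by exact_mod_cast hN2)
  rw [one_mul, norm_of_nonneg (by positivity), norm_of_nonneg (by positivity), ← sqrt_eq_rpow]
    at hN
  rw [le_div_iff₀ (by positivity)]
  calc √(N : ℝ) * log N ^ A ≤ √N * √N := by gcongr
    _ = N := mul_self_sqrt (by positivity)

theorem eventually_log_rpow_le_two_rpow_omegaThreshold {c : ℝ} (hc : 0 < c) (A : ℝ) :
    ∀ᶠ N : ℕ in atTop, log N ^ (A + 1) ≤ 2 ^ omegaThreshold c N := by
  have hloglog := tendsto_log_atTop.comp (tendsto_log_atTop.comp tendsto_natCast_atTop_atTop)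
  filter_upwards [hloglog.eventually (eventually_mul_le_exp_div_log ((A + 1) / log 2) hc),
    eventually_ge_atTop 2] with N hN hN2
  have hlog : 0 < log N := log_pos (by exact_mod_cast hN2)
  simp only [Function.comp_apply, div_mul_eq_mul_div, div_le_iff₀ (log_pos one_lt_two)] at hN
  rw [rpow_def_of_pos hlog, rpow_def_of_pos two_pos, exp_le_exp, omegaThreshold]
  linarith

theorem isBigO_card_manyFactors {c : ℝ} (hc : 0 < c) (A : ℝ) :
    (fun N : ℕ => (#(manyFactors c N) : ℝ)) =O[atTop] fun N => N / log N ^ A := by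
  refine IsBigO.of_bound 4 ?_
  filter_upwards [eventually_sqrt_le_div_log_rpow A,
    eventually_log_rpow_le_two_rpow_omegaThreshold hc A,
    (tendsto_log_atTop.comp tendsto_natCast_atTop_atTop).eventually_ge_atTop 1,
    eventually_ge_atTop 1] with N hsqrt hT hlog hN
  simp only [Function.comp_apply] at hlog
  have hsqrt1 : 1 ≤ √(N : ℝ) := one_le_sqrt.2 (by exact_mod_cast hN)
  calc ‖(#(manyFactors c N) : ℝ)‖ ≤ √N + 1 + N * (1 + log N) / 2 ^ omegaThreshold c N := by
        rw [norm_natCast]; exact card_manyFactors_le hc.le N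
    _ ≤ √N + √N + N * (2 * log N) / log N ^ (A + 1) := by
        gcongr
        linarith
    _ = 2 * √N + 2 * (N / log N ^ A) := by
        rw [rpow_add_one (by positivity)]
        field_simp
        ring
    _ ≤ 4 * ‖(N : ℝ) / log N ^ A‖ := by
        rw [norm_of_nonneg (by positivity)]
        linarith

theorem tendsto_card_filter_div_of_isLittleO (p : ℕ → Prop) [DecidablePred p]
    (h : (fun N : ℕ => (#{k ∈ Ioc 0 N | ¬ p k} : ℝ)) =o[atTop] fun N => (N : ℝ)) :
    Tendsto (fun N : ℕ => (#{k ∈ Ioc 0 N | p k} : ℝ) / N) atTop (𝓝 1) := by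
  have hsplit (N : ℕ) : (#{k ∈ Ioc 0 N | p k} : ℝ) + #{k ∈ Ioc 0 N | ¬ p k} = N := by
    have := card_filter_add_card_filter_not (s := Ioc 0 N) p
    rw [Nat.card_Ioc, Nat.sub_zero] at this
    exact_mod_cast this
  refine (by simpa using tendsto_const_nhds.sub h.tendsto_div_nhds_zero :
    Tendsto (fun N : ℕ => 1 - (#{k ∈ Ioc 0 N | ¬ p k} : ℝ) / N) atTop (𝓝 1)).congr' ?_
  filter_upwards [eventually_ne_atTop 0] with N hN
  rw [eq_div_iff (by exact_mod_cast hN), sub_mul, div_mul_cancel₀ _ (by exact_mod_cast hN)]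
  linarith [hsplit N]

theorem isLittleO_div_log_self : (fun N : ℕ => (N : ℝ) / log N) =o[atTop] fun N => (N : ℝ) := by
  have hinv : (fun N : ℕ => (log N)⁻¹) =o[atTop] fun _ => (1 : ℝ) :=
    (isLittleO_one_iff ℝ).2
      (tendsto_inv_atTop_zero.comp (tendsto_log_atTop.comp tendsto_natCast_atTop_atTop))
  simpa [div_eq_mul_inv] using (isBigO_refl (fun N : ℕ => (N : ℝ)) atTop).mul_isLittleO hinv

theorem isLittleO_card_filter_not_le_exp_omegaExponent {c : ℝ} (hc : 0 < c) :
    (fun N : ℕ => (#{k ∈ Ioc 0 N | ¬ (#(Nat.primeFactors k) : ℝ) ≤ exp (omegaExponent c k)} : ℝ))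
      =o[atTop] fun N => (N : ℝ) := by
  set M := ⌊exp (exp (exp (exp 1)))⌋₊
  have hsub (N : ℕ) : {k ∈ Ioc 0 N | ¬ (#(Nat.primeFactors k) : ℝ) ≤ exp (omegaExponent c k)} ⊆
      range (M + 1) ∪ manyFactors c N := by
    intro k hk
    obtain ⟨hkN, hω⟩ := mem_filter.1 hk
    rw [mem_union, mem_range, Nat.lt_succ_iff, manyFactors, mem_filter]
    by_cases hE : exp (exp (exp (exp 1))) ≤ (k : ℝ)
    · exact Or.inr ⟨hkN, hE, not_le.1 hω⟩
    · exact Or.inl (Nat.le_floor (not_le.1 hE).le)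
  have hbound : (fun N : ℕ =>
      (#{k ∈ Ioc 0 N | ¬ (#(Nat.primeFactors k) : ℝ) ≤ exp (omegaExponent c k)} : ℝ))
        =O[atTop] fun N => (M + 1 : ℝ) + #(manyFactors c N) := by
    refine IsBigO.of_bound 1 (Eventually.of_forall fun N => ?_)
    rw [one_mul, norm_natCast, norm_of_nonneg (by positivity)]
    have := (card_le_card (hsub N)).trans (card_union_le _ _)
    rw [card_range] at this
    exact_mod_cast this
  refine hbound.trans_isLittleO (IsLittleO.add ?_ ?_)
  · exact (isLittleO_const_left.2 (Or.inr
      (tendsto_norm_atTop_atTop.comp tendsto_natCast_atTop_atTop)))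
  · exact ((isBigO_card_manyFactors hc 1).congr_right fun N => by rw [rpow_one]).trans_isLittleO
      isLittleO_div_log_self

/-- For every `ε ∈ (0,1/2)` and `A > 0` there is `C` such that for all `N ≥ 3` the
number of integers `e^{e^{e^e}} ≤ k ≤ N` with more than
`exp((1/2-ε) log₂k log₄k / log₃k)` distinct prime factors is at most
`C·N/(log N)^A`.  In particular, the set of `k` with at most that many distinct
prime factors has natural density one. -/
theorem few_k_with_many_prime_factors :
    ∀ ε : ℝ, 0 < ε → ε < 1 / 2 →
      (∀ A : ℝ, 0 < A → ∃ C : ℝ, 0 < C ∧ ∀ N : ℕ, 3 ≤ N →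
        (Set.ncard {k : ℕ | Real.exp (Real.exp (Real.exp (Real.exp 1))) ≤ (k : ℝ) ∧
            k ≤ N ∧
            Real.exp ((1 / 2 - ε) * Real.log (Real.log k) *
              Real.log (Real.log (Real.log (Real.log k))) /
              Real.log (Real.log (Real.log k))) < (k.primeFactors.card : ℝ)} : ℝ) ≤
          C * N / (Real.log N) ^ (A : ℝ)) ∧
      Tendsto (fun N : ℕ =>
        (Set.ncard {k : ℕ | 1 ≤ k ∧ k ≤ N ∧
            (k.primeFactors.card : ℝ) ≤
              Real.exp ((1 / 2 - ε) * Real.log (Real.log k) *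
                Real.log (Real.log (Real.log (Real.log k))) /
                Real.log (Real.log (Real.log k)))} : ℝ) / (N : ℝ))
        atTop (nhds 1) := by
  intro ε _ hε
  have hc : 0 < 1 / 2 - ε := by linarith
  refine ⟨fun A _ => ?_, ?_⟩
  · obtain ⟨C, hC, hbound⟩ := bound_of_isBigO_nat_atTop (isBigO_card_manyFactors hc A)
    refine ⟨C, hC, fun N hN => ?_⟩
    have hpos : 0 < (N : ℝ) / log N ^ A := by
      have : 0 < log N := log_pos (by exact_mod_cast (by omega : 1 < N))
      positivity
    have := hbound hpos.ne'
    rw [norm_natCast, norm_of_nonneg hpos.le, ← mul_div_assoc, ← Set.ncard_coe_finset,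
      coe_manyFactors] at this
    exact this
  · refine (tendsto_card_filter_div_of_isLittleO _
      (isLittleO_card_filter_not_le_exp_omegaExponent hc)).congr fun N => ?_
    rw [← Set.ncard_coe_finset]
    congr 3
    ext k
    simp [omegaExponent, and_assoc, Nat.one_le_iff_ne_zero, Nat.pos_iff_ne_zero]
end

section
/- Let k ≥ 3, N = φ(k), and m ≥ 1 be integers, and assume π_t + 2 ≤ N for all 1 ≤ t ≤ m. Then Ω is nonempty, and for every a ∈ {1,…,N}, P(E_a) = ∏_{t=1}^{m} (1 − 1/(N − π_t)), while for any two distinct a,b ∈ {1,…,N}, P(E_a ∩ E_b) = ∏_{t=1}^{m} (1 − 2/(N − π_t)). -/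
/-!
Read the coordinates in the order of the primes. Since the primes increase, the earlier
coordinates in conflict with coordinate `t` (those `j < t` with `p_t - p_j < k`) are also in
conflict with each other, so any admissible assignment gives them `π_t` distinct values.
Hence every admissible assignment of the first `t` coordinates that avoids a set `F` of values
extends in exactly `N - π_t - |F|` ways, and the number of points of `Ω` avoiding `F` is
`∏_t (N - π_t - |F|)`. The probabilities are the quotients of these counts for `|F| = 1, 2`
by the count for `F = ∅`.
-/

open scoped Classical

/-- `π_t` (0-indexed): the number of indices `j < t` with `p_{t+1} - p_{j+1} < k`,
where `p_1 < p_2 < ⋯` are the primes (so `Nat.nth Nat.Prime t` is `p_{t+1}`). -/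
noncomputable def pit (k t : ℕ) : ℕ :=
  ((Finset.range t).filter
    (fun j : ℕ => Nat.nth Nat.Prime t - Nat.nth Nat.Prime j < k)).card

/-- The probability space `Ω = {x ∈ {1,…,N}^m : x_i ≠ x_j whenever i ≠ j and
|p_i - p_j| < k}` (indices 0-based, values in `Fin N`). -/
noncomputable def probSpace (k N m : ℕ) : Finset (Fin m → Fin N) :=
  Finset.univ.filter (fun x : Fin m → Fin N => ∀ i j : Fin m, i ≠ j →
    |(Nat.nth Nat.Prime (i : ℕ) : ℤ) - (Nat.nth Nat.Prime (j : ℕ) : ℤ)| < (k : ℤ) →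
    x i ≠ x j)

namespace SpacedColouring

variable {α : Type*} [Fintype α] (f : ℕ → ℕ) (k : ℕ)

noncomputable def avoidingColourings (m : ℕ) (F : Finset α) : Finset (Fin m → α) :=
  Finset.univ.filter fun x => (∀ i j : Fin m, i ≠ j →
    |(f i : ℤ) - (f j : ℤ)| < (k : ℤ) → x i ≠ x j) ∧ ∀ t, x t ∉ F

noncomputable def backDegree (t : ℕ) : ℕ :=
  ((Finset.range t).filter fun j => f t - f j < k).card

noncomputable def earlierConflicts (m : ℕ) : Finset (Fin m) :=
  Finset.univ.filter fun j => f m - f j < k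

noncomputable def admissibleColours {m : ℕ} (F : Finset α) (y : Fin m → α) : Finset α :=
  (F ∪ (earlierConflicts f k m).image y)ᶜ

variable {f k}

lemma card_earlierConflicts (m : ℕ) : (earlierConflicts f k m).card = backDegree f k m := by
  rw [earlierConflicts, backDegree, Finset.card_filter, Finset.card_filter,
    Fin.sum_univ_eq_sum_range (fun j => if f m - f j < k then 1 else 0)]

lemma abs_cast_sub_lt_iff (hf : Monotone f) {i j : ℕ} (hji : j ≤ i) :
    |(f i : ℤ) - (f j : ℤ)| < k ↔ f i - f j < k := by
  have := hf hji
  rw [abs_of_nonneg (by simpa using this)]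
  omega

lemma abs_sub_lt_of_mem_earlierConflicts (hf : Monotone f) {m : ℕ} {i j : Fin m}
    (hi : i ∈ earlierConflicts f k m) (hj : j ∈ earlierConflicts f k m) :
    |(f i : ℤ) - (f j : ℤ)| < k := by
  simp only [earlierConflicts, Finset.mem_filter, Finset.mem_univ, true_and] at hi hj
  have := hf i.isLt.le
  have := hf j.isLt.le
  rw [abs_lt]
  constructor <;> omega

lemma snoc_mem_avoidingColourings_iff (hf : Monotone f) {m : ℕ} {F : Finset α}
    (y : Fin m → α) (c : α) :
    (Fin.snoc y c : Fin (m + 1) → α) ∈ avoidingColourings f k (m + 1) F ↔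
      y ∈ avoidingColourings f k m F ∧ c ∈ admissibleColours f k F y := by
  have hlast (i : Fin m) : |(f m : ℤ) - (f i : ℤ)| < k ↔ f m - f i < k :=
    abs_cast_sub_lt_iff hf i.isLt.le
  have hlast' (i : Fin m) : |(f i : ℤ) - (f m : ℤ)| < k ↔ f m - f i < k := by
    rw [abs_sub_comm, hlast]
  simp only [avoidingColourings, admissibleColours, earlierConflicts, Finset.mem_filter,
    Finset.mem_univ, true_and, Finset.mem_compl, Finset.mem_union, Finset.mem_image, not_or,
    not_exists, not_and, Fin.forall_fin_succ', Fin.snoc_castSucc, Fin.snoc_last,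
    Fin.val_castSucc, Fin.val_last, ne_eq, Fin.castSucc_inj, Fin.castSucc_ne_last,
    fun i => (Fin.castSucc_ne_last (n := m) i).symm, hlast, hlast', forall_and,
    not_false_eq_true, not_true_eq_false, true_imp_iff, false_imp_iff, and_true, eq_comm (a := c)]
  tauto

lemma filter_init_eq_image_snoc (hf : Monotone f) {m : ℕ} {F : Finset α} {y : Fin m → α}
    (hy : y ∈ avoidingColourings f k m F) :
    (avoidingColourings f k (m + 1) F).filter (fun x => Fin.init x = y) =
      (admissibleColours f k F y).image (Fin.snoc y) := by
  ext x
  simp only [Finset.mem_filter, Finset.mem_image]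
  constructor
  · rintro ⟨hx, rfl⟩
    rw [← Fin.snoc_init_self x, snoc_mem_avoidingColourings_iff hf] at hx
    exact ⟨x (Fin.last m), hx.2, Fin.snoc_init_self x⟩
  · rintro ⟨c, hc, rfl⟩
    exact ⟨(snoc_mem_avoidingColourings_iff hf y c).2 ⟨hy, hc⟩, Fin.init_snoc _ _⟩

lemma card_admissibleColours (hf : Monotone f) {m : ℕ} {F : Finset α} {y : Fin m → α}
    (hy : y ∈ avoidingColourings f k m F) :
    (admissibleColours f k F y).card = Fintype.card α - backDegree f k m - F.card := by
  simp only [avoidingColourings, Finset.mem_filter, Finset.mem_univ, true_and] at hy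
  obtain ⟨hproper, havoid⟩ := hy
  have hdisj : Disjoint F ((earlierConflicts f k m).image y) := by
    simp only [Finset.disjoint_right, Finset.mem_image]
    rintro _ ⟨j, -, rfl⟩
    exact havoid j
  have hinj : Set.InjOn y (earlierConflicts f k m) := fun i hi j hj hyij => by
    by_contra hij
    exact hproper i j hij (abs_sub_lt_of_mem_earlierConflicts hf hi hj) hyij
  rw [admissibleColours, Finset.card_compl, Finset.card_union_of_disjoint hdisj,
    Finset.card_image_of_injOn hinj, card_earlierConflicts]
  omega

theorem card_avoidingColourings (hf : Monotone f) (m : ℕ) (F : Finset α) :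
    (avoidingColourings f k m F).card =
      ∏ t ∈ Finset.range m, (Fintype.card α - backDegree f k t - F.card) := by
  induction m with
  | zero => simp [avoidingColourings, Finset.filter_true_of_mem, Finset.univ_unique]
  | succ m ih =>
    have hinit : ∀ x ∈ avoidingColourings f k (m + 1) F,
        Fin.init x ∈ avoidingColourings f k m F := fun x hx => by
      rw [← Fin.snoc_init_self x, snoc_mem_avoidingColourings_iff hf] at hx
      exact hx.1
    rw [Finset.card_eq_sum_card_fiberwise hinit, Finset.prod_range_succ, ← ih,
      ← smul_eq_mul, ← Finset.sum_const]
    refine Finset.sum_congr rfl fun y hy => ?_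
    rw [filter_init_eq_image_snoc hf hy,
      Finset.card_image_of_injective _ (Fin.snoc_right_injective (α := fun _ => α) y),
      card_admissibleColours hf hy]

end SpacedColouring

lemma prod_sub_div_prod_eq {ι : Type*} (s : Finset ι) {n c : ℕ} {b : ι → ℕ} (hc : 0 < c)
    (h : ∀ t ∈ s, b t + c ≤ n) :
    ((∏ t ∈ s, (n - b t - c) : ℕ) : ℝ) / ((∏ t ∈ s, (n - b t) : ℕ) : ℝ) =
      ∏ t ∈ s, (1 - (c : ℝ) / ((n : ℝ) - b t)) := by
  rw [Nat.cast_prod, Nat.cast_prod, ← Finset.prod_div_distrib]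
  refine Finset.prod_congr rfl fun t ht => ?_
  have hle := h t ht
  have hpos : (0 : ℝ) < n - b t := by
    rw [sub_pos]
    exact_mod_cast (by omega : b t < n)
  rw [Nat.cast_sub (by omega), Nat.cast_sub (by omega)]
  field_simp

lemma filter_probSpace_eq_avoidingColourings (k N m : ℕ) (F : Finset (Fin N)) :
    (probSpace k N m).filter (fun x => ∀ t, x t ∉ F) =
      SpacedColouring.avoidingColourings (Nat.nth Nat.Prime) k m F := by
  ext x
  simp [probSpace, SpacedColouring.avoidingColourings]

lemma card_filter_probSpace (k N m : ℕ) (F : Finset (Fin N)) :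
    ((probSpace k N m).filter (fun x => ∀ t, x t ∉ F)).card =
      ∏ t ∈ Finset.range m, (N - pit k t - F.card) := by
  rw [filter_probSpace_eq_avoidingColourings,
    SpacedColouring.card_avoidingColourings (Nat.nth_monotone Nat.infinite_setOfPred_prime),
    Fintype.card_fin]
  rfl

lemma card_probSpace (k N m : ℕ) :
    (probSpace k N m).card = ∏ t ∈ Finset.range m, (N - pit k t) := by
  simpa using card_filter_probSpace k N m ∅

lemma card_filter_probSpace_div_card (k N m : ℕ) (F : Finset (Fin N)) (hF : 0 < F.card)
    (h : ∀ t < m, pit k t + F.card ≤ N) :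
    (((probSpace k N m).filter (fun x => ∀ t, x t ∉ F)).card : ℝ) / (probSpace k N m).card =
      ∏ t ∈ Finset.range m, (1 - (F.card : ℝ) / ((N : ℝ) - pit k t)) := by
  rw [card_filter_probSpace, card_probSpace]
  exact prod_sub_div_prod_eq _ hF fun t ht => h t (Finset.mem_range.1 ht)

theorem coupon_probabilities_general (k N m : ℕ) (hpi : ∀ t : ℕ, t < m → pit k t + 2 ≤ N) :
    (probSpace k N m).Nonempty ∧
    (∀ a : Fin N,
      (((probSpace k N m).filter (fun x => ∀ t : Fin m, x t ≠ a)).card : ℝ) /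
          ((probSpace k N m).card : ℝ) =
        ∏ t ∈ Finset.range m, (1 - 1 / ((N : ℝ) - (pit k t : ℝ)))) ∧
    (∀ a b : Fin N, a ≠ b →
      (((probSpace k N m).filter
          (fun x => (∀ t : Fin m, x t ≠ a) ∧ (∀ t : Fin m, x t ≠ b))).card : ℝ) /
          ((probSpace k N m).card : ℝ) =
        ∏ t ∈ Finset.range m, (1 - 2 / ((N : ℝ) - (pit k t : ℝ)))) := by
  refine ⟨?_, fun a => ?_, fun a b hab => ?_⟩
  · rw [← Finset.card_pos, card_probSpace]
    exact Finset.prod_pos fun t ht => by have := hpi t (Finset.mem_range.1 ht); omega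
  · simpa using card_filter_probSpace_div_card k N m {a} (by simp)
      fun t ht => by rw [Finset.card_singleton]; have := hpi t ht; omega
  · have hcard : ({a, b} : Finset (Fin N)).card = 2 := Finset.card_pair hab
    simpa [hcard, forall_and] using card_filter_probSpace_div_card k N m {a, b} (by omega)
      fun t ht => hcard ▸ hpi t ht

/-- Let `k ≥ 3`, `N = φ(k)`, `m ≥ 1`, and assume `π_t + 2 ≤ N` for all `1 ≤ t ≤ m`.
Then `Ω ≠ ∅`, and for every `a`, `P(E_a) = ∏_{t=1}^m (1 - 1/(N - π_t))`, while for
distinct `a ≠ b`, `P(E_a ∩ E_b) = ∏_{t=1}^m (1 - 2/(N - π_t))`.  Here `E_a` is the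
event that no coordinate equals `a`, and `P` is the uniform measure on `Ω`. -/
theorem coupon_probabilities (k N m : ℕ) (hk : 3 ≤ k) (hN : N = Nat.totient k)
    (hm : 1 ≤ m) (hpi : ∀ t : ℕ, t < m → pit k t + 2 ≤ N) :
    (probSpace k N m).Nonempty ∧
    (∀ a : Fin N,
      (((probSpace k N m).filter (fun x => ∀ t : Fin m, x t ≠ a)).card : ℝ) /
          ((probSpace k N m).card : ℝ) =
        ∏ t ∈ Finset.range m, (1 - 1 / ((N : ℝ) - (pit k t : ℝ)))) ∧
    (∀ a b : Fin N, a ≠ b →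
      (((probSpace k N m).filter
          (fun x => (∀ t : Fin m, x t ≠ a) ∧ (∀ t : Fin m, x t ≠ b))).card : ℝ) /
          ((probSpace k N m).card : ℝ) =
        ∏ t ∈ Finset.range m, (1 - 2 / ((N : ℝ) - (pit k t : ℝ)))) :=
  coupon_probabilities_general k N m hpi
end

section
/- Let k ≥ 3, N = φ(k), and m ≥ 1 be integers, and assume π_t + 2 ≤ N for all 1 ≤ t ≤ m. Then the complements E_a^c (a = 1,…,N) are negatively correlated: P(E_1^c ∩ E_2^c ∩ … ∩ E_N^c) ≤ P(E_1^c)·P(E_2^c)···P(E_N^c). -/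
open scoped Classical

/-!
`Ω` is the set of proper `N`-colourings of the vertices `0, …, m - 1` of the graph joining
`i ≠ j` when `|p_i - p_j| < k`. Colour the vertices one at a time. The earlier neighbours of each
vertex form a clique (primes below `p_t` and within distance `k` of it are within distance `k`
of each other), so every proper colouring of the first `m` vertices has exactly `N - d_m`
extensions, `d_m` being the number of earlier neighbours of vertex `m`. Hence the colourings
that avoid a colour `b` and miss at most `r` colours of a set `S` obey a linear recursion in `m`
with `N - 1` in place of `N`. Comparing the two recursions shows, by induction on `m`, that
banning `b` makes missing at most `r` colours of `S` more likely. For `r = 0` this is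
`P(S used, b used) ≤ P(S used) P(b used)`, and induction on `S` gives the product bound.
-/

open Finset

theorem Finset.card_filter_card_erase_le {β : Type*} [DecidableEq β] {M A : Finset β}
    (hMA : M ⊆ A) (r : ℕ) :
    #{c ∈ A | #(M.erase c) ≤ r} =
      (if #M ≤ r then #A else 0) + (if #M = r + 1 then r + 1 else 0) := by
  rcases lt_trichotomy #M (r + 1) with hlt | heq | hgt
  · rw [filter_true_of_mem fun c _ => (card_erase_le).trans (by omega), if_pos (by omega),
      if_neg (by omega), add_zero]
  · have hfilter : {c ∈ A | #(M.erase c) ≤ r} = M := by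
      ext c
      by_cases hc : c ∈ M
      · simp [hc, hMA hc, card_erase_of_mem hc, heq]
      · simp [hc, heq]
    rw [hfilter, if_neg (by omega), if_pos heq, heq, zero_add]
  · have hnone (c : β) : ¬#(M.erase c) ≤ r := by
      have := pred_card_le_card_erase (s := M) (a := c)
      omega
    rw [filter_false_of_mem fun c _ => hnone c, if_neg (by omega), if_neg (by omega), card_empty]

theorem div_le_div_mul_div_of_mul_le {K : Type*} [Field K] [LinearOrder K] [IsStrictOrderedRing K]
    {a b c d : K} (hc : 0 ≤ c) (h : a * c ≤ b * d) : a / c ≤ b / c * (d / c) := by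
  rcases hc.eq_or_lt with rfl | hc
  · simp
  · rw [div_mul_div_comm, div_le_div_iff₀ hc (by positivity), ← mul_assoc]
    exact mul_le_mul_of_nonneg_right h hc.le

noncomputable def missingColors {α : Type*} {m : ℕ} (S : Finset α) (x : Fin m → α) :
    Finset α :=
  {a ∈ S | a ∉ Set.range x}

theorem missingColors_snoc {α : Type*} {m : ℕ} (S : Finset α) (y : Fin m → α) (c : α) :
    missingColors S (Fin.snoc y c : Fin (m + 1) → α) = (missingColors S y).erase c := by
  ext a
  simp only [missingColors, mem_filter, mem_erase, Fin.range_snoc, Set.mem_insert_iff]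
  tauto

noncomputable section ProperColorings

variable (G : SimpleGraph ℕ) {α : Type*} [Fintype α] {m : ℕ}

variable (α) in
def properColorings (m : ℕ) : Finset (Fin m → α) :=
  {x | ∀ i j : Fin m, G.Adj i j → x i ≠ x j}

def earlierNeighbors (m : ℕ) : Finset (Fin m) :=
  {j | G.Adj j m}

def allowedColors (y : Fin m → α) : Finset α :=
  univ \ (earlierNeighbors G m).image y

def avoiding (B : Finset α) (m : ℕ) : Finset (Fin m → α) :=
  {x ∈ properColorings G α m | ∀ t, x t ∉ B}

def missingAtMost (B S : Finset α) (r m : ℕ) : Finset (Fin m → α) :=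
  {x ∈ avoiding G B m | #(missingColors S x) ≤ r}

def missingExactly (B S : Finset α) (r m : ℕ) : Finset (Fin m → α) :=
  {x ∈ avoiding G B m | #(missingColors S x) = r}

variable {G} {B S : Finset α}

theorem mem_properColorings {x : Fin m → α} :
    x ∈ properColorings G α m ↔ ∀ i j : Fin m, G.Adj i j → x i ≠ x j := by
  simp [properColorings]

theorem mem_avoiding {x : Fin m → α} :
    x ∈ avoiding G B m ↔ x ∈ properColorings G α m ∧ ∀ t, x t ∉ B :=
  mem_filter

theorem snoc_mem_properColorings {y : Fin m → α} {c : α} :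
    Fin.snoc y c ∈ properColorings G α (m + 1) ↔
      y ∈ properColorings G α m ∧ c ∈ allowedColors G y := by
  simp only [mem_properColorings, allowedColors, earlierNeighbors, mem_sdiff, mem_univ,
    true_and, mem_image, mem_filter, not_exists, not_and]
  constructor
  · intro h
    refine ⟨fun i j hij => by simpa using h i.castSucc j.castSucc (by simpa using hij),
      fun j hj hjc => ?_⟩
    simpa [hjc] using h j.castSucc (Fin.last m) (by simpa using hj)
  · rintro ⟨hy, hc⟩ i j hij
    induction i using Fin.lastCases <;> induction j using Fin.lastCases
    · exact absurd hij (G.irrefl)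
    · simpa using fun h => hc _ (by simpa using hij.symm) h.symm
    · simpa using hc _ (by simpa using hij)
    · simpa using hy _ _ (by simpa using hij)

theorem card_filter_properColorings_succ (Q : (Fin (m + 1) → α) → Prop) [DecidablePred Q] :
    #{x ∈ properColorings G α (m + 1) | Q x} =
      ∑ y ∈ properColorings G α m, #{c ∈ allowedColors G y | Q (Fin.snoc y c)} := by
  rw [card_eq_sum_card_fiberwise (f := Fin.init) (t := properColorings G α m)]
  · refine sum_congr rfl fun y hy =>
      card_nbij' (· (Fin.last m)) (fun c => Fin.snoc y c) ?_ ?_ ?_ ?_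
    · rintro x hx
      simp only [coe_filter, mem_filter, Set.mem_ofPred_eq] at hx ⊢
      obtain ⟨⟨hx, hQ⟩, rfl⟩ := hx
      rw [← Fin.snoc_init_self x] at hx hQ
      exact ⟨(snoc_mem_properColorings.1 hx).2, hQ⟩
    · intro c hc
      simp only [coe_filter, mem_filter, Set.mem_ofPred_eq] at hc ⊢
      exact ⟨⟨snoc_mem_properColorings.2 ⟨hy, hc.1⟩, hc.2⟩, Fin.init_snoc _ _⟩
    · rintro x hx
      simp only [coe_filter, mem_filter, Set.mem_ofPred_eq] at hx
      exact hx.2 ▸ Fin.snoc_init_self x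
    · intro c _
      simp
  · intro x hx
    rw [coe_filter, Set.mem_ofPred_eq, ← Fin.snoc_init_self x] at hx
    exact (snoc_mem_properColorings.1 hx.1).1

theorem injOn_earlierNeighbors (hG : ∀ t, G.IsClique {j | j < t ∧ G.Adj j t})
    {y : Fin m → α} (hy : y ∈ properColorings G α m) :
    Set.InjOn y (earlierNeighbors G m) := by
  intro i hi j hj hij
  by_contra hne
  simp only [earlierNeighbors, coe_filter, mem_univ, true_and, Set.mem_ofPred_eq] at hi hj
  exact mem_properColorings.1 hy i j (hG m ⟨i.2, hi⟩ ⟨j.2, hj⟩ (Fin.val_injective.ne hne)) hij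

theorem subset_allowedColors {y : Fin m → α} (hy : ∀ t, y t ∉ B) : B ⊆ allowedColors G y := by
  intro c hc
  simp only [allowedColors, mem_sdiff, mem_univ, true_and, mem_image, not_exists, not_and]
  exact fun j _ hjc => hy j (hjc ▸ hc)

theorem card_allowedColors_sdiff (hG : ∀ t, G.IsClique {j | j < t ∧ G.Adj j t})
    {y : Fin m → α} (hy : y ∈ avoiding G B m) :
    #(allowedColors G y \ B) = Fintype.card α - #(earlierNeighbors G m) - #B := by
  rw [mem_avoiding] at hy
  rw [card_sdiff_of_subset (subset_allowedColors hy.2), allowedColors,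
    card_sdiff_of_subset (subset_univ _), card_univ,
    card_image_of_injOn (injOn_earlierNeighbors hG hy.1)]

theorem missingColors_subset_allowedColors_sdiff (hSB : Disjoint S B) (y : Fin m → α) :
    missingColors S y ⊆ allowedColors G y \ B := by
  refine subset_sdiff.2 ⟨fun c hc => ?_, disjoint_of_subset_left (filter_subset _ _) hSB⟩
  simp only [missingColors, mem_filter, Set.mem_range, not_exists] at hc
  simp only [allowedColors, mem_sdiff, mem_univ, true_and, mem_image, not_exists, not_and]
  exact fun j _ => hc.2 j

theorem snoc_mem_avoiding {y : Fin m → α} {c : α} :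
    Fin.snoc y c ∈ avoiding G B (m + 1) ↔ y ∈ avoiding G B m ∧ c ∈ allowedColors G y \ B := by
  simp only [mem_avoiding, snoc_mem_properColorings, Fin.forall_fin_succ', Fin.snoc_castSucc,
    Fin.snoc_last, mem_sdiff]
  tauto

theorem card_filter_snoc_mem_missingAtMost (hG : ∀ t, G.IsClique {j | j < t ∧ G.Adj j t})
    (hSB : Disjoint S B) (r : ℕ) (y : Fin m → α) :
    #{c ∈ allowedColors G y | Fin.snoc y c ∈ missingAtMost G B S r (m + 1)} =
      (if y ∈ missingAtMost G B S r m then Fintype.card α - #(earlierNeighbors G m) - #B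
        else 0) + (if y ∈ missingExactly G B S (r + 1) m then r + 1 else 0) := by
  by_cases hyB : y ∈ avoiding G B m
  · have hfiber : {c ∈ allowedColors G y | Fin.snoc y c ∈ missingAtMost G B S r (m + 1)} =
        {c ∈ allowedColors G y \ B | #((missingColors S y).erase c) ≤ r} := by
      ext c
      simp only [missingAtMost, mem_filter, snoc_mem_avoiding, missingColors_snoc, mem_sdiff]
      tauto
    rw [hfiber, card_filter_card_erase_le (missingColors_subset_allowedColors_sdiff hSB y),
      card_allowedColors_sdiff hG hyB]
    simp [missingAtMost, missingExactly, hyB]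
  · have hfiber : {c ∈ allowedColors G y | Fin.snoc y c ∈ missingAtMost G B S r (m + 1)} = ∅ :=
      filter_false_of_mem fun c _ h => hyB (snoc_mem_avoiding.1 (mem_filter.1 h).1).1
    rw [hfiber, card_empty]
    simp [missingAtMost, missingExactly, hyB]

theorem missingAtMost_subset_properColorings (B S : Finset α) (r m : ℕ) :
    missingAtMost G B S r m ⊆ properColorings G α m :=
  (filter_subset _ _).trans (filter_subset _ _)

theorem missingExactly_subset_properColorings (B S : Finset α) (r m : ℕ) :
    missingExactly G B S r m ⊆ properColorings G α m :=
  (filter_subset _ _).trans (filter_subset _ _)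

/-- A colouring missing at most `r` colours of `S` keeps this property under each of its
`card α - d - #B` admissible extensions; one missing exactly `r + 1` keeps it exactly when the new
colour is one of the missing ones. -/
theorem card_missingAtMost_succ (hG : ∀ t, G.IsClique {j | j < t ∧ G.Adj j t})
    (hSB : Disjoint S B) (r m : ℕ) :
    #(missingAtMost G B S r (m + 1)) =
      (Fintype.card α - #(earlierNeighbors G m) - #B) * #(missingAtMost G B S r m) +
        (r + 1) * #(missingExactly G B S (r + 1) m) := by
  rw [← inter_eq_right.2 (missingAtMost_subset_properColorings B S r (m + 1)),
    ← filter_mem_eq_inter, card_filter_properColorings_succ]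
  simp only [card_filter_snoc_mem_missingAtMost hG hSB r, sum_add_distrib, sum_ite_mem,
    inter_eq_right.2 (missingAtMost_subset_properColorings B S r m),
    inter_eq_right.2 (missingExactly_subset_properColorings B S (r + 1) m), sum_const,
    smul_eq_mul]
  ring

theorem card_missingAtMost_add_one (B S : Finset α) (r m : ℕ) :
    #(missingAtMost G B S (r + 1) m) =
      #(missingAtMost G B S r m) + #(missingExactly G B S (r + 1) m) := by
  rw [missingAtMost, missingAtMost, missingExactly, ← card_union_of_disjoint
    (disjoint_filter.2 fun _ _ h₁ h₂ => by omega), ← filter_or]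
  simp only [Nat.le_succ_iff]

theorem missingExactly_eq_empty (hG : ∀ t, G.IsClique {j | j < t ∧ G.Adj j t})
    (hSB : Disjoint S B) {j : ℕ} (hj : Fintype.card α - #(earlierNeighbors G m) - #B < j) :
    missingExactly G B S j m = ∅ :=
  filter_false_of_mem fun y hy hyj => by
    have := card_le_card (missingColors_subset_allowedColors_sdiff (G := G) hSB y)
    rw [card_allowedColors_sdiff hG hy] at this
    omega

theorem avoiding_empty (m : ℕ) : avoiding G (∅ : Finset α) m = properColorings G α m :=
  filter_true_of_mem fun _ _ _ => notMem_empty _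

theorem card_avoiding_succ (hG : ∀ t, G.IsClique {j | j < t ∧ G.Adj j t}) (B : Finset α)
    (m : ℕ) :
    #(avoiding G B (m + 1)) = (Fintype.card α - #(earlierNeighbors G m) - #B) *
      #(avoiding G B m) := by
  have hS (n : ℕ) : missingAtMost G B ∅ 0 n = avoiding G B n :=
    filter_true_of_mem fun _ _ => by simp [missingColors]
  have hE : missingExactly G B ∅ 1 m = ∅ := filter_false_of_mem fun _ _ => by simp [missingColors]
  simpa [hS, hE] using card_missingAtMost_succ hG (disjoint_empty_left B) 0 m

/-- Banning a colour `b ∉ S` makes it more likely that at most `r` colours of `S` are missing. -/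
theorem card_missingAtMost_mul_card_avoiding_le (hG : ∀ t, G.IsClique {j | j < t ∧ G.Adj j t})
    {b : α} (hbS : b ∉ S) (r m : ℕ) :
    #(missingAtMost G ∅ S r m) * #(avoiding G {b} m) ≤
      #(missingAtMost G {b} S r m) * #(properColorings G α m) := by
  induction m generalizing r with
  | zero =>
    have h (B : Finset α) : avoiding G B 0 = properColorings G α 0 :=
      filter_true_of_mem fun _ _ t => t.elim0
    simp [missingAtMost, h]
  | succ m ih =>
    have hSb : Disjoint S {b} := disjoint_singleton_right.2 hbS
    rw [card_missingAtMost_succ hG (disjoint_empty_right S) r m,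
      card_missingAtMost_succ hG hSb r m, ← avoiding_empty, card_avoiding_succ hG,
      card_avoiding_succ hG, avoiding_empty]
    simp only [card_empty, card_singleton, Nat.sub_zero]
    set A := Fintype.card α - #(earlierNeighbors G m)
    by_cases hr : r + 1 ≤ A
    · obtain ⟨s, hs⟩ : ∃ s, A = r + 1 + s := ⟨_, (Nat.add_sub_of_le hr).symm⟩
      have h₀ := ih r
      have h₁ := ih (r + 1)
      rw [card_missingAtMost_add_one, card_missingAtMost_add_one] at h₁
      rw [hs, show r + 1 + s - 1 = r + s by omega]
      -- the goal is `(r + s) s · h₀ + (r + 1) (r + s) · h₁` plus a nonnegative term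
      nlinarith [Nat.mul_le_mul_left ((r + s) * s) h₀, Nat.mul_le_mul_left ((r + 1) * (r + s)) h₁,
        Nat.zero_le ((r + 1) * #(missingExactly G {b} S (r + 1) m) * #(properColorings G α m))]
    · rw [missingExactly_eq_empty hG (disjoint_empty_right S) (by rw [card_empty]; omega),
        missingExactly_eq_empty hG hSb (by rw [card_singleton]; omega), card_empty, mul_zero,
        add_zero]
      nlinarith [Nat.mul_le_mul_left (A * (A - 1)) (ih r)]

theorem missingAtMost_zero (B S : Finset α) (m : ℕ) :
    missingAtMost G B S 0 m = {x ∈ avoiding G B m | ∀ a ∈ S, a ∈ Set.range x} := by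
  simp [missingAtMost, missingColors, filter_eq_empty_iff]

theorem avoiding_singleton (b : α) (m : ℕ) :
    avoiding G {b} m = {x ∈ properColorings G α m | b ∉ Set.range x} := by
  simp [avoiding]

theorem card_filter_forall_mem_insert_mul_le (hG : ∀ t, G.IsClique {j | j < t ∧ G.Adj j t})
    {b : α} (hbS : b ∉ S) (m : ℕ) :
    #{x ∈ properColorings G α m | ∀ a ∈ insert b S, a ∈ Set.range x} *
        #(properColorings G α m) ≤
      #{x ∈ properColorings G α m | ∀ a ∈ S, a ∈ Set.range x} *
        #{x ∈ properColorings G α m | b ∈ Set.range x} := by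
  have hdom := card_missingAtMost_mul_card_avoiding_le hG hbS 0 m
  rw [missingAtMost_zero, missingAtMost_zero, avoiding_empty, avoiding_singleton,
    filter_filter] at hdom
  have hU := card_filter_add_card_filter_not
    (s := {x ∈ properColorings G α m | ∀ a ∈ S, a ∈ Set.range x}) (fun x => b ∈ Set.range x)
  have hT := card_filter_add_card_filter_not
    (s := properColorings G α m) (fun x => b ∈ Set.range x)
  simp only [filter_filter, forall_mem_insert, and_comm] at hU hdom ⊢
  nlinarith

theorem card_filter_forall_mem_div_le_prod (hG : ∀ t, G.IsClique {j | j < t ∧ G.Adj j t})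
    (S : Finset α) (m : ℕ) :
    (#{x ∈ properColorings G α m | ∀ a ∈ S, a ∈ Set.range x} : ℝ) / #(properColorings G α m) ≤
      ∏ a ∈ S, (#{x ∈ properColorings G α m | a ∈ Set.range x} : ℝ) /
        #(properColorings G α m) := by
  induction S using Finset.induction_on with
  | empty => simpa using div_self_le_one _
  | insert b S hbS ih =>
    rw [prod_insert hbS, mul_comm]
    calc _ ≤ (#{x ∈ properColorings G α m | ∀ a ∈ S, a ∈ Set.range x} : ℝ) /
          #(properColorings G α m) *
          (#{x ∈ properColorings G α m | b ∈ Set.range x} / #(properColorings G α m)) :=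
          div_le_div_mul_div_of_mul_le (Nat.cast_nonneg _)
            (mod_cast card_filter_forall_mem_insert_mul_le hG hbS m)
      _ ≤ _ := by gcongr

end ProperColorings

def proximityGraph (f : ℕ → ℤ) (k : ℤ) : SimpleGraph ℕ where
  Adj i j := i ≠ j ∧ |f i - f j| < k
  symm := ⟨fun _ _ h => ⟨h.1.symm, abs_sub_comm (f _) (f _) ▸ h.2⟩⟩
  loopless := ⟨fun _ h => h.1 rfl⟩

theorem isClique_proximityGraph {f : ℕ → ℤ} (hf : Monotone f) (k : ℤ) (t : ℕ) :
    (proximityGraph f k).IsClique {j | j < t ∧ (proximityGraph f k).Adj j t} := by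
  rintro i ⟨hit, -, hi⟩ j ⟨hjt, -, hj⟩ hij
  refine ⟨hij, ?_⟩
  have := hf hit.le
  have := hf hjt.le
  rw [abs_sub_lt_iff] at hi hj ⊢
  rcases le_total i j with h | h <;> have := hf h <;> constructor <;> linarith

theorem coupon_negative_correlation_general (k N m : ℕ) :
    (((probSpace k N m).filter
        (fun x => ∀ a : Fin N, ∃ t : Fin m, x t = a)).card : ℝ) /
        ((probSpace k N m).card : ℝ) ≤
      ∏ a : Fin N,
        ((((probSpace k N m).filter (fun x => ∃ t : Fin m, x t = a)).card : ℝ) /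
          ((probSpace k N m).card : ℝ)) := by
  have hΩ : probSpace k N m =
      properColorings (proximityGraph (fun i => (Nat.nth Nat.Prime i : ℤ)) k) (Fin N) m := by
    ext x
    simp [probSpace, mem_properColorings, proximityGraph, Fin.val_injective.ne_iff]
  have hmono : Monotone fun i => (Nat.nth Nat.Prime i : ℤ) :=
    fun _ _ h => Nat.cast_le.2 (Nat.nth_monotone Nat.infinite_setOfPred_prime h)
  have h := card_filter_forall_mem_div_le_prod (isClique_proximityGraph hmono k)
    (univ : Finset (Fin N)) m
  simp only [mem_univ, true_implies, Set.mem_range, ← hΩ] at h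
  exact h

/-- Let `k ≥ 3`, `N = φ(k)`, `m ≥ 1`, and assume `π_t + 2 ≤ N` for all `1 ≤ t ≤ m`.
Then the events `E_a^c` (some coordinate equals `a`) are negatively correlated:
`P(⋂_a E_a^c) ≤ ∏_a P(E_a^c)`, with `P` the uniform measure on `Ω`. -/
theorem coupon_negative_correlation (k N m : ℕ) (hk : 3 ≤ k)
    (hN : N = Nat.totient k) (hm : 1 ≤ m)
    (hpi : ∀ t : ℕ, t < m → pit k t + 2 ≤ N) :
    (((probSpace k N m).filter
        (fun x => ∀ a : Fin N, ∃ t : Fin m, x t = a)).card : ℝ) /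
        ((probSpace k N m).card : ℝ) ≤
      ∏ a : Fin N,
        ((((probSpace k N m).filter (fun x => ∃ t : Fin m, x t = a)).card : ℝ) /
          ((probSpace k N m).card : ℝ)) :=
  coupon_negative_correlation_general k N m
end

section
/- Let r ≥ 1 and let h_1 < h_2 < … < h_r be nonnegative integers, and let s be a prime. (a) If p is a prime with s ≠ p, then #{n ∈ ℤ/sℤ : ∏_{i=1}^r (n + h_i·p) = 0} equals the number of distinct residues among h_1,…,h_r modulo s; and if s = p then this count equals 1. (b) Fix i ∈ {1,…,r} and an integer q; if s ∤ q then #{n ∈ ℤ/sℤ : n·∏_{j≠i} ((h_j−h_i)·n + q) = 0} equals the number of distinct residues among h_1,…,h_r modulo s; and if s | q and s ∤ (h_j − h_i) for all j ≠ i, then this count equals 1. -/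
/-!
Reduced mod `s`, each count is the number of roots in the field `ZMod s` of a product of
linear factors. In (a) the roots `-hᵢ p` are the residues `hᵢ` moved by the injective map
`b ↦ -b p` when `p` is a unit, and all collapse to `0` when `p = s`. In (b) the roots are the
residues `hⱼ` moved by the injective map `b ↦ -q (b - hᵢ)⁻¹`; when `s ∣ q` and no `hⱼ - hᵢ`
vanishes, only `0` is left.
-/

open Finset

lemma card_filter_range_dvd_eq_card_zeros (s : ℕ) [NeZero s] (f : ℕ → ℤ)
    (g : ZMod s → ZMod s) (hfg : ∀ n : ℕ, (f n : ZMod s) = g n) :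
    #{n ∈ range s | (s : ℤ) ∣ f n} = #{x | g x = 0} := by
  simp_rw [← ZMod.intCast_zmod_eq_zero_iff_dvd, hfg]
  refine card_nbij' (fun n => (n : ZMod s)) ZMod.val ?_ ?_ ?_ ?_
  · intro n hn
    simpa using (mem_filter.1 hn).2
  · intro x hx
    simpa [ZMod.val_lt] using (mem_filter.1 hx).2
  · intro n hn
    exact ZMod.val_cast_of_lt (mem_range.1 (mem_filter.1 hn).1)
  · intro x _
    exact ZMod.natCast_zmod_val x

lemma card_image_mod_eq_card_image_natCast {ι : Type*} [Fintype ι] (a : ι → ℕ) (s : ℕ)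
    [NeZero s] : #(univ.image fun i => a i % s) = #(univ.image fun i => (a i : ZMod s)) := by
  rw [← card_image_of_injective _ (ZMod.val_injective s), image_image]
  simp only [Function.comp_def, ZMod.val_natCast]

section LinearForms

variable {R ι : Type*} [CommRing R] [IsDomain R] [Fintype R] [DecidableEq R] [Fintype ι]

lemma filter_prod_add_mul_eq_zero (a : ι → R) (c : R) :
    ({x | ∏ i, (x + a i * c) = 0} : Finset R) = univ.image fun i => -(a i * c) := by
  ext x
  simp only [mem_filter, mem_univ, true_and, mem_image, prod_eq_zero_iff, add_eq_zero_iff_eq_neg]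
  exact exists_congr fun _ => eq_comm

lemma card_filter_prod_add_mul_eq_zero {c : R} (hc : c ≠ 0) (a : ι → R) :
    #{x | ∏ i, (x + a i * c) = 0} = #(univ.image a) := by
  rw [filter_prod_add_mul_eq_zero, ← card_image_of_injective (univ.image a)
    (neg_injective.comp (mul_left_injective₀ hc)), image_image]
  rfl

lemma card_filter_prod_add_mul_zero_eq_zero [Nonempty ι] (a : ι → R) :
    #{x | ∏ i, (x + a i * 0) = 0} = 1 := by
  simp [filter_eq']

lemma card_filter_mul_prod_sub_mul_eq_zero [DecidableEq ι] (a : ι → R) (i : ι)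
    (ha : ∀ j ≠ i, a j ≠ a i) :
    #{x | x * ∏ j ∈ univ.erase i, ((a j - a i) * x) = 0} = 1 := by
  suffices ({x | x * ∏ j ∈ univ.erase i, ((a j - a i) * x) = 0} : Finset R) = {0} by
    rw [this, card_singleton]
  ext x
  simp +contextual [prod_eq_zero_iff, sub_eq_zero, ha]

end LinearForms

lemma mul_add_eq_zero_iff_eq_neg_mul_inv {F : Type*} [Field F] {d q x : F} (hq : q ≠ 0) :
    d * x + q = 0 ↔ x ≠ 0 ∧ x = -q * d⁻¹ := by
  rcases eq_or_ne d 0 with rfl | hd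
  · simp [hq]
  rw [add_eq_zero_iff_eq_neg, eq_mul_inv_iff_mul_eq₀ hd, mul_comm, iff_and_self]
  rintro hdx rfl
  exact hq (by simpa using hdx)

section Field

variable {F ι : Type*} [Field F] [Fintype F] [DecidableEq F] [Fintype ι] [DecidableEq ι]

-- The root `0` of the factor `x` is the term `j = i`, because `0⁻¹ = 0`.
lemma filter_mul_prod_sub_mul_add_eq_zero (a : ι → F) (i : ι) {q : F} (hq : q ≠ 0) :
    ({x | x * ∏ j ∈ univ.erase i, ((a j - a i) * x + q) = 0} : Finset F) =
      univ.image fun j => -q * (a j - a i)⁻¹ := by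
  ext x
  simp only [mem_filter, mem_univ, true_and, mul_eq_zero, prod_eq_zero_iff, mem_erase,
    mem_image, mul_add_eq_zero_iff_eq_neg_mul_inv hq]
  constructor
  · rintro (rfl | ⟨j, -, -, rfl⟩)
    · exact ⟨i, by simp⟩
    · exact ⟨j, rfl⟩
  · rintro ⟨j, rfl⟩
    by_cases hx : -q * (a j - a i)⁻¹ = 0
    · exact .inl hx
    · exact .inr ⟨j, ⟨fun hji => hx (by simp [hji]), trivial⟩, hx, rfl⟩

lemma card_filter_mul_prod_sub_mul_add_eq_zero (a : ι → F) (i : ι) {q : F} (hq : q ≠ 0) :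
    #{x | x * ∏ j ∈ univ.erase i, ((a j - a i) * x + q) = 0} = #(univ.image a) := by
  rw [filter_mul_prod_sub_mul_add_eq_zero a i hq, ← card_image_of_injective (univ.image a)
    ((mul_right_injective₀ (neg_ne_zero.2 hq)).comp (inv_injective.comp (sub_left_injective))),
    image_image]
  rfl

end Field

theorem omega_of_linear_forms_general (r : ℕ) (hr : 1 ≤ r) (h : Fin r → ℕ)
    (s : ℕ) (hs : s.Prime) :
    (∀ p : ℕ, p.Prime → s ≠ p →
      ((Finset.range s).filter
          (fun n : ℕ => (s : ℤ) ∣ ∏ i : Fin r, ((n : ℤ) + (h i : ℤ) * (p : ℤ)))).card =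
        (Finset.image (fun i : Fin r => h i % s) Finset.univ).card) ∧
    (∀ p : ℕ, p.Prime → s = p →
      ((Finset.range s).filter
          (fun n : ℕ => (s : ℤ) ∣ ∏ i : Fin r, ((n : ℤ) + (h i : ℤ) * (p : ℤ)))).card = 1) ∧
    (∀ i : Fin r, ∀ q : ℤ, ¬ (s : ℤ) ∣ q →
      ((Finset.range s).filter
          (fun n : ℕ => (s : ℤ) ∣
            ((n : ℤ) * ∏ j ∈ Finset.univ.erase i,
              (((h j : ℤ) - (h i : ℤ)) * (n : ℤ) + q)))).card =
        (Finset.image (fun i : Fin r => h i % s) Finset.univ).card) ∧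
    (∀ i : Fin r, ∀ q : ℤ, (s : ℤ) ∣ q →
      (∀ j : Fin r, j ≠ i → ¬ (s : ℤ) ∣ ((h j : ℤ) - (h i : ℤ))) →
      ((Finset.range s).filter
          (fun n : ℕ => (s : ℤ) ∣
            ((n : ℤ) * ∏ j ∈ Finset.univ.erase i,
              (((h j : ℤ) - (h i : ℤ)) * (n : ℤ) + q)))).card = 1) := by
  have := Fact.mk hs
  have : Nonempty (Fin r) := ⟨⟨0, hr⟩⟩
  have hres := card_image_mod_eq_card_image_natCast h s
  refine ⟨fun p hp hsp => ?_, fun p _ hsp => ?_, fun i q hq => ?_, fun i q hq hdiff => ?_⟩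
  · have hp0 : (p : ZMod s) ≠ 0 := fun hp0 =>
      hsp ((Nat.prime_dvd_prime_iff_eq hs hp).1 ((ZMod.natCast_eq_zero_iff p s).1 hp0))
    rw [card_filter_range_dvd_eq_card_zeros s _ (fun x => ∏ i, (x + (h i : ZMod s) * p))
      (by intro n; push_cast; rfl), card_filter_prod_add_mul_eq_zero hp0, hres]
  · subst hsp
    rw [card_filter_range_dvd_eq_card_zeros s _ (fun x => ∏ i, (x + (h i : ZMod s) * 0))
      (by intro n; push_cast [ZMod.natCast_self]; rfl), card_filter_prod_add_mul_zero_eq_zero]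
  · have hq0 : (q : ZMod s) ≠ 0 := (ZMod.intCast_zmod_eq_zero_iff_dvd q s).not.2 hq
    rw [card_filter_range_dvd_eq_card_zeros s _
      (fun x => x * ∏ j ∈ univ.erase i, (((h j : ZMod s) - h i) * x + q))
      (by intro n; push_cast; rfl),
      card_filter_mul_prod_sub_mul_add_eq_zero _ i hq0, hres]
  · have hq0 : (q : ZMod s) = 0 := (ZMod.intCast_zmod_eq_zero_iff_dvd q s).2 hq
    have hne : ∀ j ≠ i, (h j : ZMod s) ≠ h i := fun j hj hji =>
      hdiff j hj ((ZMod.intCast_zmod_eq_zero_iff_dvd _ s).1 (by push_cast; exact sub_eq_zero.2 hji))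
    rw [card_filter_range_dvd_eq_card_zeros s _
      (fun x => x * ∏ j ∈ univ.erase i, (((h j : ZMod s) - h i) * x))
      (by intro n; push_cast [hq0, add_zero]; rfl), card_filter_mul_prod_sub_mul_eq_zero _ i hne]

/-- Counting roots mod `s` of products of linear forms.  Let `h_1 < ⋯ < h_r` be
nonnegative integers and `s` a prime.
(a) For a prime `p ≠ s`, the number of `n` mod `s` with `∏ᵢ (n + hᵢ·p) ≡ 0 (mod s)`
equals the number of distinct residues of the `hᵢ` mod `s`; for `p = s` it equals `1`.
(b) For fixed `i` and an integer `q`: if `s ∤ q`, the number of `n` mod `s` with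
`n·∏_{j≠i} ((h_j - h_i)·n + q) ≡ 0 (mod s)` equals the number of distinct residues of
the `hᵢ` mod `s`; if `s ∣ q` and `s ∤ (h_j - h_i)` for all `j ≠ i`, it equals `1`. -/
theorem omega_of_linear_forms (r : ℕ) (hr : 1 ≤ r) (h : Fin r → ℕ)
    (hmono : StrictMono h) (s : ℕ) (hs : s.Prime) :
    (∀ p : ℕ, p.Prime → s ≠ p →
      ((Finset.range s).filter
          (fun n : ℕ => (s : ℤ) ∣ ∏ i : Fin r, ((n : ℤ) + (h i : ℤ) * (p : ℤ)))).card =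
        (Finset.image (fun i : Fin r => h i % s) Finset.univ).card) ∧
    (∀ p : ℕ, p.Prime → s = p →
      ((Finset.range s).filter
          (fun n : ℕ => (s : ℤ) ∣ ∏ i : Fin r, ((n : ℤ) + (h i : ℤ) * (p : ℤ)))).card = 1) ∧
    (∀ i : Fin r, ∀ q : ℤ, ¬ (s : ℤ) ∣ q →
      ((Finset.range s).filter
          (fun n : ℕ => (s : ℤ) ∣
            ((n : ℤ) * ∏ j ∈ Finset.univ.erase i,
              (((h j : ℤ) - (h i : ℤ)) * (n : ℤ) + q)))).card =
        (Finset.image (fun i : Fin r => h i % s) Finset.univ).card) ∧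
    (∀ i : Fin r, ∀ q : ℤ, (s : ℤ) ∣ q →
      (∀ j : Fin r, j ≠ i → ¬ (s : ℤ) ∣ ((h j : ℤ) - (h i : ℤ))) →
      ((Finset.range s).filter
          (fun n : ℕ => (s : ℤ) ∣
            ((n : ℤ) * ∏ j ∈ Finset.univ.erase i,
              (((h j : ℤ) - (h i : ℤ)) * (n : ℤ) + q)))).card = 1) :=
  omega_of_linear_forms_general r hr h s hs
end
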